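/- arXiv:2107.13447 — 3 statements merged into one kernel-verified Lean document; each statement's English description precedes it below -/
import Mathlib

section
/- In the ring of 4×4 real matrices, let x_1(a) = I + a·E_{12}, x_2(a) = I + a·E_{23}, x_3(a) = I + a·E_{34}. Suppose a_1, a_2, a_3, a_2', b_1, b_2, b_3, b_2' are positive reals such that x_2(a_2)·x_3(a_3)·x_1(a_1)·x_2(a_2')·x_2(a_2')·x_3(a_1)·x_1(a_3)·x_2(a_2) = x_3(b_3)·x_2(b_2)·x_1(b_1)·x_2(b_2')·x_2(b_2')·x_3(b_1)·x_2(b_2)·x_1(b_3). Then the following four relations hold: (1) a_1 + a_3 = b_1 + b_3; (2) a_2 + a_2' = b_2 + b_2'; (3) a_1^2·a_2' = b_1^2·b_2'; (4) (a_1 + a_3)·a_2 + 2·a_1·a_2' = b_1·(b_2 + 2·b_2'). -/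
theorem mul_fin_four {α : Type*} [AddCommMonoid α] [Mul α]
    (a00 a01 a02 a03 a10 a11 a12 a13 a20 a21 a22 a23 a30 a31 a32 a33 b00 b01 b02 b03 b10 b11 b12 b13 b20 b21 b22 b23 b30 b31 b32 b33 : α) :
    !![a00, a01, a02, a03;
       a10, a11, a12, a13;
       a20, a21, a22, a23;
       a30, a31, a32, a33] * !![b00, b01, b02, b03;
       b10, b11, b12, b13;
       b20, b21, b22, b23;
       b30, b31, b32, b33] =
    !![a00*b00 + a01*b10 + a02*b20 + a03*b30, a00*b01 + a01*b11 + a02*b21 + a03*b31, a00*b02 + a01*b12 + a02*b22 + a03*b32, a00*b03 + a01*b13 + a02*b23 + a03*b33;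
       a10*b00 + a11*b10 + a12*b20 + a13*b30, a10*b01 + a11*b11 + a12*b21 + a13*b31, a10*b02 + a11*b12 + a12*b22 + a13*b32, a10*b03 + a11*b13 + a12*b23 + a13*b33;
       a20*b00 + a21*b10 + a22*b20 + a23*b30, a20*b01 + a21*b11 + a22*b21 + a23*b31, a20*b02 + a21*b12 + a22*b22 + a23*b32, a20*b03 + a21*b13 + a22*b23 + a23*b33;
       a30*b00 + a31*b10 + a32*b20 + a33*b30, a30*b01 + a31*b11 + a32*b21 + a33*b31, a30*b02 + a31*b12 + a32*b22 + a33*b32, a30*b03 + a31*b13 + a32*b23 + a33*b33] := by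
  ext i j
  fin_cases i <;> fin_cases j <;>
    simp [Matrix.mul_apply, Fin.sum_univ_succ, ← add_assoc]


/-- The Chevalley generator `x₁(a) = I + a·E₁₂` of the upper unitriangular subgroup of `SL₄(ℝ)`. -/
def x1 (a : ℝ) : Matrix (Fin 4) (Fin 4) ℝ := !![1, a, 0, 0; 0, 1, 0, 0; 0, 0, 1, 0; 0, 0, 0, 1]

/-- The Chevalley generator `x₂(a) = I + a·E₂₃` of the upper unitriangular subgroup of `SL₄(ℝ)`. -/
def x2 (a : ℝ) : Matrix (Fin 4) (Fin 4) ℝ := !![1, 0, 0, 0; 0, 1, a, 0; 0, 0, 1, 0; 0, 0, 0, 1]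

/-- The Chevalley generator `x₃(a) = I + a·E₃₄` of the upper unitriangular subgroup of `SL₄(ℝ)`. -/
def x3 (a : ℝ) : Matrix (Fin 4) (Fin 4) ℝ := !![1, 0, 0, 0; 0, 1, 0, 0; 0, 0, 1, a; 0, 0, 0, 1]

set_option maxHeartbeats 1600000 in
lemma lhs_eq (a1 a2 a3 a2' : ℝ) :
    x2 a2 * x3 a3 * x1 a1 * x2 a2' * x2 a2' * x3 a1 * x1 a3 * x2 a2 =
    !![1, a1 + a3, a2*a3 + 2*a1*a2' + a1*a2, 2*a1^2*a2';
       0, 1, 2*a2' + 2*a2, a2*a3 + 2*a1*a2' + a1*a2;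
       0, 0, 1, a1 + a3;
       0, 0, 0, 1] := by
  simp only [x1, x2, x3]
  rw [mul_fin_four, mul_fin_four, mul_fin_four, mul_fin_four, mul_fin_four, mul_fin_four,
    mul_fin_four]
  ext i j
  fin_cases i <;> fin_cases j <;> simp <;> ring

set_option maxHeartbeats 1600000 in
lemma rhs_eq (b1 b2 b3 b2' : ℝ) :
    x3 b3 * x2 b2 * x1 b1 * x2 b2' * x2 b2' * x3 b1 * x2 b2 * x1 b3 =
    !![1, b1 + b3, 2*b1*b2' + b1*b2, 2*b1^2*b2';
       0, 1, 2*b2' + 2*b2, 2*b1*b2' + b1*b2;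
       0, 0, 1, b1 + b3;
       0, 0, 0, 1] := by
  simp only [x1, x2, x3]
  rw [mul_fin_four, mul_fin_four, mul_fin_four, mul_fin_four, mul_fin_four, mul_fin_four,
    mul_fin_four]
  ext i j
  fin_cases i <;> fin_cases j <;> simp <;> ring

/-- Lusztig 4.6(a): the four relations attached to the non-standard braid move in type `A₃`
with the diagram involution exchanging 1 and 3. -/
theorem transition_A3_relations (a1 a2 a3 a2' b1 b2 b3 b2' : ℝ)
    (ha1 : 0 < a1) (ha2 : 0 < a2) (ha3 : 0 < a3) (ha2' : 0 < a2')
    (hb1 : 0 < b1) (hb2 : 0 < b2) (hb3 : 0 < b3) (hb2' : 0 < b2')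
    (h : x2 a2 * x3 a3 * x1 a1 * x2 a2' * x2 a2' * x3 a1 * x1 a3 * x2 a2 =
         x3 b3 * x2 b2 * x1 b1 * x2 b2' * x2 b2' * x3 b1 * x2 b2 * x1 b3) :
    a1 + a3 = b1 + b3 ∧
    a2 + a2' = b2 + b2' ∧
    a1 ^ 2 * a2' = b1 ^ 2 * b2' ∧
    (a1 + a3) * a2 + 2 * a1 * a2' = b1 * (b2 + 2 * b2') := by
  rw [lhs_eq, rhs_eq] at h
  have h01 := congrFun (congrFun h 0) 1
  have h12 := congrFun (congrFun h 1) 2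
  have h03 := congrFun (congrFun h 0) 3
  have h02 := congrFun (congrFun h 0) 2
  simp at h01 h12 h03 h02
  refine ⟨h01, by linarith, by nlinarith, by nlinarith⟩
end

section
/- In the ring of 4×4 real matrices, with x_1(a) = I + a·E_{12}, x_2(a) = I + a·E_{23}, x_3(a) = I + a·E_{34}: for all positive reals b_1, b_2, b_3, b_2' there exists a unique quadruple of positive reals (a_1, a_2, a_3, a_2') such that x_2(a_2)·x_3(a_3)·x_1(a_1)·x_2(a_2')·x_2(a_2')·x_3(a_1)·x_1(a_3)·x_2(a_2) = x_3(b_3)·x_2(b_2)·x_1(b_1)·x_2(b_2')·x_2(b_2')·x_3(b_1)·x_2(b_2)·x_1(b_3). Moreover, setting δ = b_3^2 + (b_2·b_3·(b_1+b_3))/b_2' (so δ > 0), the solution is given by a_1 = b_1·(b_1+b_3)/(b_1 + √δ), a_3 = (b_1+b_3)·√δ/(b_1 + √δ), a_2' = b_2'·(b_1 + √δ)^2/(b_1+b_3)^2, and a_2 = b_2^2·b_1/(b_2·b_1 + b_2·b_3 + 2·b_2'·b_3 + 2·b_2'·√δ), where √δ is the positive square root of δ. -/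
/-- The discriminant `δ = b₃² + b₂b₃(b₁+b₃)/b₂'` of the inverse direction of Lusztig 4.6. -/
noncomputable def deltav (b1 b2 b3 b2' : ℝ) : ℝ := b3 ^ 2 + b2 * b3 * (b1 + b3) / b2'

/-- The explicit value of `a₁` in the inverse direction of Lusztig 4.6
(with the sign `ε = 1` forced by positivity). -/
noncomputable def a1v (b1 b2 b3 b2' : ℝ) : ℝ :=
  b1 * (b1 + b3) / (b1 + Real.sqrt (deltav b1 b2 b3 b2'))

/-- The explicit value of `a₃` in the inverse direction of Lusztig 4.6. -/
noncomputable def a3v (b1 b2 b3 b2' : ℝ) : ℝ :=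
  (b1 + b3) * Real.sqrt (deltav b1 b2 b3 b2') / (b1 + Real.sqrt (deltav b1 b2 b3 b2'))

/-- The explicit value of `a₂'` in the inverse direction of Lusztig 4.6. -/
noncomputable def a2'v (b1 b2 b3 b2' : ℝ) : ℝ :=
  b2' * (b1 + Real.sqrt (deltav b1 b2 b3 b2')) ^ 2 / (b1 + b3) ^ 2

/-- The explicit value of `a₂` in the inverse direction of Lusztig 4.6. -/
noncomputable def a2v (b1 b2 b3 b2' : ℝ) : ℝ :=
  b2 ^ 2 * b1 / (b2 * b1 + b2 * b3 + 2 * b2' * b3 +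
    2 * b2' * Real.sqrt (deltav b1 b2 b3 b2'))

/-!
Both braid words multiply out to the same kind of upper unitriangular matrix, determined by the
four invariants `a₁ + a₃`, `a₂ + a₂'`, `a₂a₃ + 2a₁a₂' + a₁a₂` and `a₁²a₂'`; so the braid relation
is a system of four polynomial equations. Eliminating `a₃`, `a₂'` and `a₂` leaves a quadratic
equation for `a₁`, and for two positive solutions `a`, `c` the difference of these quadratics
factors as `(a₁ - c₁) a₂' (c₁a₃ + a₁c₃)`, whence uniqueness. For existence, after rationalizing
`a₂` the explicit formulas, written with an arbitrary square root `s` of `δ`, satisfy three of the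
equations identically in `s`, and the remaining one is `s² = δ`.
-/

def wordL (a1 a2 a3 a2' : ℝ) : Matrix (Fin 4) (Fin 4) ℝ :=
  x2 a2 * x3 a3 * x1 a1 * x2 a2' * x2 a2' * x3 a1 * x1 a3 * x2 a2

def wordR (b1 b2 b3 b2' : ℝ) : Matrix (Fin 4) (Fin 4) ℝ :=
  x3 b3 * x2 b2 * x1 b1 * x2 b2' * x2 b2' * x3 b1 * x2 b2 * x1 b3

def braidMatrix (s t p q : ℝ) : Matrix (Fin 4) (Fin 4) ℝ :=
  !![1, s, p, 2 * q; 0, 1, 2 * t, p; 0, 0, 1, s; 0, 0, 0, 1]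

theorem braidMatrix_inj {s t p q s' t' p' q' : ℝ} :
    braidMatrix s t p q = braidMatrix s' t' p' q' ↔ s = s' ∧ t = t' ∧ p = p' ∧ q = q' := by
  refine ⟨fun h => ⟨?_, ?_, ?_, ?_⟩, by rintro ⟨rfl, rfl, rfl, rfl⟩; rfl⟩
  · simpa [braidMatrix] using congrFun₂ h 0 1
  · simpa [braidMatrix] using congrFun₂ h 1 2
  · simpa [braidMatrix] using congrFun₂ h 0 2
  · simpa [braidMatrix] using congrFun₂ h 0 3

theorem wordL_eq_braidMatrix (a1 a2 a3 a2' : ℝ) :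
    wordL a1 a2 a3 a2' =
      braidMatrix (a1 + a3) (a2 + a2') (a2 * a3 + 2 * a1 * a2' + a1 * a2) (a1 ^ 2 * a2') := by
  ext i j
  fin_cases i <;> fin_cases j <;>
    simp [wordL, braidMatrix, x1, x2, x3, Matrix.mul_apply, Fin.sum_univ_four] <;> ring

theorem wordR_eq_braidMatrix (b1 b2 b3 b2' : ℝ) :
    wordR b1 b2 b3 b2' =
      braidMatrix (b1 + b3) (b2 + b2') (b1 * b2 + 2 * b1 * b2') (b1 ^ 2 * b2') := by
  ext i j
  fin_cases i <;> fin_cases j <;>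
    simp [wordR, braidMatrix, x1, x2, x3, Matrix.mul_apply, Fin.sum_univ_four] <;> ring

theorem eq_of_wordL_eq_wordL {a1 a2 a3 a2' c1 c2 c3 c2' : ℝ} (ha1 : 0 < a1) (ha3 : 0 < a3)
    (ha2' : 0 < a2') (hc1 : 0 < c1) (hc3 : 0 < c3)
    (h : wordL a1 a2 a3 a2' = wordL c1 c2 c3 c2') : (a1, a2, a3, a2') = (c1, c2, c3, c2') := by
  rw [wordL_eq_braidMatrix, wordL_eq_braidMatrix, braidMatrix_inj] at h
  obtain ⟨e1, e2, e3, e4⟩ := h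
  have hfactor : (a1 - c1) * (a2' * (c1 * a3 + a1 * c3)) = 0 := by
    linear_combination (-(a2 + a2') * c1 ^ 2 + a1 ^ 2 * a2' - (a1 - c1) * a2' * a1) * e1
      - (c1 + c3) * c1 ^ 2 * e2 + c1 ^ 2 * e3 + (c3 - c1) * e4
  have h1 : a1 = c1 := sub_eq_zero.mp <| (mul_eq_zero.mp hfactor).resolve_right (by positivity)
  subst h1
  have h2' : a2' = c2' := mul_left_cancel₀ (pow_ne_zero 2 ha1.ne') e4
  have h3 : a3 = c3 := by linarith
  have h2 : a2 = c2 := by linarith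
  rw [h2, h3, h2']

theorem wordL_eq_wordR_of_sq_eq_deltav {b1 b2 b3 b2' s : ℝ} (hs : s ^ 2 = deltav b1 b2 b3 b2')
    (hb2' : b2' ≠ 0) (hS : b1 + b3 ≠ 0) (hD : b1 + s ≠ 0)
    (hN : b2 * b1 + b2 * b3 + 2 * b2' * b3 + 2 * b2' * s ≠ 0) :
    wordL (b1 * (b1 + b3) / (b1 + s))
        (b2 ^ 2 * b1 / (b2 * b1 + b2 * b3 + 2 * b2' * b3 + 2 * b2' * s))
        ((b1 + b3) * s / (b1 + s)) (b2' * (b1 + s) ^ 2 / (b1 + b3) ^ 2) =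
      wordR b1 b2 b3 b2' := by
  have hs' : b2' * s ^ 2 = b2' * b3 ^ 2 + b2 * b3 * (b1 + b3) := by
    rw [hs, deltav]; field_simp
  -- multiply numerator and denominator by the conjugate `b₂(b₁+b₃) + 2b₂'(b₃ - s)`
  have ha2 : b2 ^ 2 * b1 / (b2 * b1 + b2 * b3 + 2 * b2' * b3 + 2 * b2' * s) =
      b1 * (b2 * (b1 + b3) + 2 * b2' * (b3 - s)) / (b1 + b3) ^ 2 := by
    rw [div_eq_div_iff hN (pow_ne_zero 2 hS)]
    linear_combination 4 * b1 * b2' * hs'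
  rw [ha2, wordL_eq_braidMatrix, wordR_eq_braidMatrix, braidMatrix_inj]
  refine ⟨?_, ?_, ?_, ?_⟩ <;> field_simp
  · linear_combination hs'
  · ring

/-- Lusztig 4.3(iv)/4.6, inverse direction: for positive `b₁, b₂, b₃, b₂'` there is a unique
quadruple of positive reals `(a₁, a₂, a₃, a₂')` solving the non-standard braid relation in
type `A₃`, and it is given by the explicit formulas with `δ > 0`. -/
theorem transition_A3_inverse_explicit (b1 b2 b3 b2' : ℝ)
    (hb1 : 0 < b1) (hb2 : 0 < b2) (hb3 : 0 < b3) (hb2' : 0 < b2') :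
    (∃! q : ℝ × ℝ × ℝ × ℝ,
      (0 < q.1 ∧ 0 < q.2.1 ∧ 0 < q.2.2.1 ∧ 0 < q.2.2.2) ∧
      x2 q.2.1 * x3 q.2.2.1 * x1 q.1 * x2 q.2.2.2 * x2 q.2.2.2 *
          x3 q.1 * x1 q.2.2.1 * x2 q.2.1 =
        x3 b3 * x2 b2 * x1 b1 * x2 b2' * x2 b2' * x3 b1 * x2 b2 * x1 b3) ∧
    0 < deltav b1 b2 b3 b2' ∧
    x2 (a2v b1 b2 b3 b2') * x3 (a3v b1 b2 b3 b2') * x1 (a1v b1 b2 b3 b2') *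
        x2 (a2'v b1 b2 b3 b2') * x2 (a2'v b1 b2 b3 b2') * x3 (a1v b1 b2 b3 b2') *
        x1 (a3v b1 b2 b3 b2') * x2 (a2v b1 b2 b3 b2') =
      x3 b3 * x2 b2 * x1 b1 * x2 b2' * x2 b2' * x3 b1 * x2 b2 * x1 b3 := by
  have hδ : 0 < deltav b1 b2 b3 b2' := by unfold deltav; positivity
  have hpos : 0 < a1v b1 b2 b3 b2' ∧ 0 < a2v b1 b2 b3 b2' ∧ 0 < a3v b1 b2 b3 b2' ∧
      0 < a2'v b1 b2 b3 b2' := by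
    unfold a1v a2v a3v a2'v
    refine ⟨?_, ?_, ?_, ?_⟩ <;> positivity
  have hsol : wordL (a1v b1 b2 b3 b2') (a2v b1 b2 b3 b2') (a3v b1 b2 b3 b2') (a2'v b1 b2 b3 b2') =
      wordR b1 b2 b3 b2' :=
    wordL_eq_wordR_of_sq_eq_deltav (Real.sq_sqrt hδ.le) hb2'.ne' (by positivity) (by positivity)
      (by positivity)
  refine ⟨⟨(a1v b1 b2 b3 b2', a2v b1 b2 b3 b2', a3v b1 b2 b3 b2', a2'v b1 b2 b3 b2'),
    ⟨hpos, hsol⟩, ?_⟩, hδ, hsol⟩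
  rintro ⟨c1, c2, c3, c2'⟩ ⟨⟨hc1, -, hc3, hc2'⟩, hc⟩
  exact eq_of_wordL_eq_wordL hc1 hc3 hc2' hpos.1 hpos.2.2.1 (hc.trans hsol.symm)
end

section
/- Let J = diag(1, −1) and let A be a 2×2 real matrix with nonnegative entries, equal diagonal entries (A_{11} = A_{22}) and det A = 1. Then there exists g ∈ GL_2(ℝ) such that A = g · J · g^{−1} · J. -/
/-- The matrix `J = diag(1, −1)`. -/
def Jmat : Matrix (Fin 2) (Fin 2) ℝ := !![1, 0; 0, -1]

/-- An instance of Lusztig 3.7(a) for `GL₂(ℝ)`: every `2×2` real matrix with nonnegative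
entries, equal diagonal entries and determinant `1` is of the form `g·J·g⁻¹·J` for some
`g ∈ GL₂(ℝ)`. -/
theorem pos_part_in_orbit (A : Matrix (Fin 2) (Fin 2) ℝ)
    (hpos : ∀ i j : Fin 2, 0 ≤ A i j) (hdiag : A 0 0 = A 1 1) (hdet : A.det = 1) :
    ∃ g : GL (Fin 2) ℝ,
      A = (g : Matrix (Fin 2) (Fin 2) ℝ) * Jmat *
        ((g⁻¹ : GL (Fin 2) ℝ) : Matrix (Fin 2) (Fin 2) ℝ) * Jmat := by
  set a := A 0 0 with ha
  set b := A 0 1 with hb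
  set c := A 1 0 with hc
  have hA : A = !![a, b; c, a] := by
    rw [Matrix.eta_fin_two A, ← ha, ← hb, ← hc, ← hdiag]
  have hdet' : a * a - b * c = 1 := by
    rw [Matrix.det_fin_two, ← hdiag] at hdet; linarith
  set M : Matrix (Fin 2) (Fin 2) ℝ := !![a + 1, b; c, a + 1] with hM
  have hMdet : M.det = 2 * (a + 1) := by
    rw [hM, Matrix.det_fin_two_of]; nlinarith
  have ha0 : 0 ≤ a := hpos 0 0
  have hMdetU : IsUnit M.det := by
    rw [hMdet]; exact (by positivity : (0:ℝ) < 2 * (a + 1)).ne'.isUnit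
  refine ⟨Matrix.nonsingInvUnit M hMdetU, ?_⟩
  have hcoe : ((Matrix.nonsingInvUnit M hMdetU : GL (Fin 2) ℝ) :
      Matrix (Fin 2) (Fin 2) ℝ) = M := rfl
  have hcoeinv : (((Matrix.nonsingInvUnit M hMdetU)⁻¹ : GL (Fin 2) ℝ) :
      Matrix (Fin 2) (Fin 2) ℝ) = M⁻¹ := by
    rw [Matrix.coe_units_inv, hcoe]
  rw [hcoe, hcoeinv]
  have key : M * Jmat = A * Jmat * M := by
    rw [hA, hM, Jmat]
    ext i j
    fin_cases i <;> fin_cases j <;>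
      simp [Matrix.mul_apply, Fin.sum_univ_two] <;> nlinarith
  have hMM : M * M⁻¹ = 1 := Matrix.mul_nonsing_inv M hMdetU
  have hJJ : Jmat * Jmat = 1 := by
    rw [Jmat]; norm_num [Matrix.mul_fin_two, ← Matrix.one_fin_two]
  calc A = A * Jmat * M * M⁻¹ * Jmat * Jmat * Jmat := by
        rw [mul_assoc (A * Jmat) M, hMM]
        rw [mul_one, mul_assoc, mul_assoc, hJJ, mul_one, mul_assoc, hJJ, mul_one]
    _ = M * Jmat * M⁻¹ * Jmat := by
        rw [← key, mul_assoc (M * Jmat * M⁻¹), hJJ, mul_one]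
end
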